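/- arXiv:2208.00549 — 2 statements merged into one kernel-verified Lean document; each statement's English description precedes it below -/
import Mathlib

section
/- Let M be a real symmetric positive definite k×k matrix, let X₁,…,X_m be real symmetric positive semidefinite k×k matrices, and let w₁,…,w_m ≥ 0 with Σᵢ wᵢ = 1. Then Σᵢ wᵢ · log det(Xᵢ·M⁻¹ + Id) ≤ log det((Σᵢ wᵢ Xᵢ)·M⁻¹ + Id). (Jensen's inequality for the concave function X ↦ log det(X·M⁻¹ + Id) on the positive semidefinite cone.) -/
/-!
Since `X·M⁻¹ + Id = (X + M)·M⁻¹`, the claim is Jensen's inequality for `log det` on positive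
definite matrices `Aᵢ = Xᵢ + M`. To prove that, conjugate by an invertible `R` with
`Rᴴ S R = Id`, where `S = ∑ wᵢ Aᵢ`: this shifts every `log det` by the same constant, and
`log x ≤ x - 1` on eigenvalues gives `log det (Rᴴ Aᵢ R) ≤ tr (Rᴴ Aᵢ R) - k`, whose weighted
average is `tr Id - k = 0 = log det (Rᴴ S R)`.
-/

open Matrix Finset
open scoped MatrixOrder ComplexOrder

namespace Matrix

variable {n : Type*}

theorem posDef_sum_smul {𝕜 ι : Type*} [RCLike 𝕜] [Fintype ι] {A : ι → Matrix n n 𝕜}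
    (hA : ∀ i, (A i).PosDef) {w : ι → ℝ} (hw : ∀ i, 0 ≤ w i) (hw0 : ∑ i, w i ≠ 0) :
    (∑ i, w i • A i).PosDef := by
  classical
  rw [← sum_filter_of_ne (p := fun i => w i ≠ 0) fun i _ h hwi => h (by simp [hwi])]
  obtain ⟨j, -, hj⟩ := exists_ne_zero_of_sum_ne_zero hw0
  exact posDef_sum ⟨j, by simpa using hj⟩ fun i hi =>
    (hA i).smul (lt_of_le_of_ne (hw i) (mem_filter.mp hi).2.symm)

variable [Fintype n] [DecidableEq n]

theorem PosDef.log_det_le_trace_sub_card {A : Matrix n n ℝ} (hA : A.PosDef) :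
    Real.log A.det ≤ A.trace - Fintype.card n := by
  have hpos := hA.eigenvalues_pos
  rw [hA.isHermitian.det_eq_prod_eigenvalues, hA.isHermitian.trace_eq_sum_eigenvalues]
  simp only [RCLike.ofReal_real_eq_id, id]
  rw [Real.log_prod fun i _ => (hpos i).ne']
  calc ∑ i, Real.log (hA.isHermitian.eigenvalues i)
      ≤ ∑ i, (hA.isHermitian.eigenvalues i - 1) :=
        sum_le_sum fun i _ => Real.log_le_sub_one_of_pos (hpos i)
    _ = _ := by simp [sum_sub_distrib]

theorem PosDef.exists_isUnit_conjTranspose_mul_mul_eq_one {𝕜 : Type*} [RCLike 𝕜]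
    {S : Matrix n n 𝕜} (hS : S.PosDef) : ∃ R : Matrix n n 𝕜, IsUnit R ∧ Rᴴ * S * R = 1 := by
  obtain ⟨B, rfl⟩ := CStarAlgebra.nonneg_iff_eq_star_mul_self.mp hS.posSemidef.nonneg
  have hB : IsUnit B := by
    have := (isUnit_iff_isUnit_det _).mp hS.isUnit
    rw [det_mul] at this
    exact (isUnit_iff_isUnit_det B).mpr (isUnit_of_mul_isUnit_right this)
  refine ⟨B⁻¹, isUnit_nonsing_inv_iff.mpr hB, ?_⟩
  rw [star_eq_conjTranspose, ← mul_assoc, ← conjTranspose_mul, mul_assoc,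
    mul_nonsing_inv B ((isUnit_iff_isUnit_det B).mp hB), conjTranspose_one, one_mul]

theorem sum_mul_log_det_le_log_det_sum {ι : Type*} [Fintype ι] {A : ι → Matrix n n ℝ}
    (hA : ∀ i, (A i).PosDef) {w : ι → ℝ} (hw : ∀ i, 0 ≤ w i) (hw1 : ∑ i, w i = 1) :
    ∑ i, w i * Real.log (A i).det ≤ Real.log (∑ i, w i • A i).det := by
  set S := ∑ i, w i • A i
  have hS : S.PosDef := posDef_sum_smul hA hw (hw1 ▸ one_ne_zero)
  obtain ⟨R, hR, hRSR⟩ := hS.exists_isUnit_conjTranspose_mul_mul_eq_one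
  have hRinj := mulVec_injective_of_isUnit hR
  have hd : 0 < (Rᴴ * R).det := (PosDef.conjTranspose_mul_self R hRinj).det_pos
  have hdet (B : Matrix n n ℝ) : (Rᴴ * B * R).det = B.det * (Rᴴ * R).det := by
    simp only [det_mul]; ring
  have hlogS : Real.log S.det = -Real.log (Rᴴ * R).det := by
    have := congrArg Real.log (hdet S)
    rw [hRSR, det_one, Real.log_one, Real.log_mul hS.det_pos.ne' hd.ne'] at this
    linarith
  calc ∑ i, w i * Real.log (A i).det
      = ∑ i, w i * Real.log (Rᴴ * A i * R).det - Real.log (Rᴴ * R).det := by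
        simp only [hdet, fun i => Real.log_mul (hA i).det_pos.ne' hd.ne', mul_add, sum_add_distrib,
          ← sum_mul, hw1, one_mul, add_sub_cancel_right]
    _ ≤ ∑ i, w i * ((Rᴴ * A i * R).trace - Fintype.card n) - Real.log (Rᴴ * R).det := by
        gcongr with i
        · exact hw i
        · exact ((hA i).conjTranspose_mul_mul_same hRinj).log_det_le_trace_sub_card
    _ = (Rᴴ * S * R).trace - Fintype.card n - Real.log (Rᴴ * R).det := by
        simp only [S, mul_sub, sum_sub_distrib, mul_sum, sum_mul,
          Matrix.mul_smul, Matrix.smul_mul, trace_sum, trace_smul, smul_eq_mul]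
        rw [← sum_mul, hw1, one_mul]
    _ = Real.log S.det := by
        rw [hRSR, trace_one, hlogS]; ring

theorem det_mul_inv_add_one {K : Type*} [Field K] {M : Matrix n n K} (hM : IsUnit M.det)
    (X : Matrix n n K) :
    (X * M⁻¹ + 1).det = (X + M).det / M.det := by
  rw [← mul_nonsing_inv M hM, ← add_mul, det_mul, det_nonsing_inv, Ring.inverse_eq_inv',
    div_eq_mul_inv]

end Matrix

/-- Jensen's inequality for the concave function
`X ↦ log det (X · M⁻¹ + Id)` on the positive semidefinite cone: for `M` symmetric positive
definite, `X₁, …, Xₘ` symmetric positive semidefinite, and convex weights `w`,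
`∑ i, wᵢ · log det (Xᵢ · M⁻¹ + Id) ≤ log det ((∑ i, wᵢ Xᵢ) · M⁻¹ + Id)`. -/
theorem stmt_2 {k m : ℕ} (M : Matrix (Fin k) (Fin k) ℝ) (hM : M.PosDef)
    (X : Fin m → Matrix (Fin k) (Fin k) ℝ) (hX : ∀ i, (X i).PosSemidef)
    (w : Fin m → ℝ) (hw : ∀ i, 0 ≤ w i) (hw1 : ∑ i, w i = 1) :
    ∑ i, w i * Real.log (X i * M⁻¹ + 1).det
      ≤ Real.log ((∑ i, w i • X i) * M⁻¹ + 1).det := by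
  have hlog {Y : Matrix (Fin k) (Fin k) ℝ} (hY : Y.PosSemidef) :
      Real.log (Y * M⁻¹ + 1).det = Real.log (Y + M).det - Real.log M.det := by
    rw [det_mul_inv_add_one hM.det_pos.ne'.isUnit,
      Real.log_div (PosDef.posSemidef_add hY hM).det_pos.ne' hM.det_pos.ne']
  have hsum : ∑ i, w i • X i + M = ∑ i, w i • (X i + M) := by
    simp only [smul_add, sum_add_distrib, ← sum_smul, hw1, one_smul]
  rw [hlog (posSemidef_sum _ fun i _ => (hX i).smul (hw i)), hsum]
  simp only [hlog (hX _), mul_sub, sum_sub_distrib, ← sum_mul, hw1, one_mul]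
  gcongr
  exact sum_mul_log_det_le_log_det_sum (fun i => PosDef.posSemidef_add (hX i) hM) hw hw1
end

section
/- Let Ω, Y_e, Y_a be random variables taking values in finite types on a common finite probability space, and suppose Y_e and Y_a are conditionally independent given Ω (i.e. P(Y_e = u, Y_a = v | Ω = w) = P(Y_e = u | Ω = w)·P(Y_a = v | Ω = w) whenever P(Ω = w) > 0). Then the mutual information between the predictions satisfies I(Y_e ; Y_a) = I(Ω ; Y_e) − I(Ω ; Y_e | Y_a). -/
open scoped Classical

section FiniteInformationTheory

variable {S : Type*} [Fintype S]

/-- The probability mass function of a random variable `X` on a finite probability space with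
point mass `P`: `P(X = a) = ∑_{s : X s = a} P s`. -/
noncomputable def pmfOf {A : Type*} (P : S → ℝ) (X : S → A) (a : A) : ℝ :=
  ∑ s, if X s = a then P s else 0

/-- The joint probability `P(X = a, Y = b)`. -/
noncomputable def pmfOf₂ {A B : Type*} (P : S → ℝ) (X : S → A) (Y : S → B)
    (a : A) (b : B) : ℝ :=
  ∑ s, if X s = a ∧ Y s = b then P s else 0

/-- The Shannon entropy `H(X) = −∑ₐ P(X = a) log P(X = a)` (with `0 log 0 = 0`, which holds
automatically since `Real.log 0 = 0`). -/
noncomputable def entropy {A : Type*} [Fintype A] (P : S → ℝ) (X : S → A) : ℝ :=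
  -∑ a, pmfOf P X a * Real.log (pmfOf P X a)

/-- The conditional entropy `H(X | Y) = −∑_{a,b} P(X = a, Y = b) log P(X = a | Y = b)`, where
`P(X = a | Y = b) = P(X = a, Y = b) / P(Y = b)`. -/
noncomputable def condEntropy {A B : Type*} [Fintype A] [Fintype B]
    (P : S → ℝ) (X : S → A) (Y : S → B) : ℝ :=
  -∑ a, ∑ b, pmfOf₂ P X Y a b * Real.log (pmfOf₂ P X Y a b / pmfOf P Y b)

/-- The mutual information `I(X ; Y) = H(X) − H(X | Y)`. -/
noncomputable def mutualInfo {A B : Type*} [Fintype A] [Fintype B]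
    (P : S → ℝ) (X : S → A) (Y : S → B) : ℝ :=
  entropy P X - condEntropy P X Y

/-- The conditional mutual information `I(X ; Y | Z) = H(X | Z) − H(X | (Y, Z))`. -/
noncomputable def condMutualInfo {A B C : Type*} [Fintype A] [Fintype B] [Fintype C]
    (P : S → ℝ) (X : S → A) (Y : S → B) (Z : S → C) : ℝ :=
  condEntropy P X Z - condEntropy P X (fun s => (Y s, Z s))

end FiniteInformationTheory

/-!
Write every entropy as an expectation over the sample space, `H(X) = −∑ₛ P s · log P(X = X s)`.
Then `H(X | Y) = H(X, Y) − H(Y)`, and the claimed identity is equivalent to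
`H(Ω, Y_e, Y_a) + H(Ω) = H(Ω, Y_e) + H(Ω, Y_a)`. Conditional independence says
`P(Ω, Y_e, Y_a) · P(Ω) = P(Ω, Y_e) · P(Ω, Y_a)` at every sample point of positive mass,
where all four probabilities are positive, so this holds already pointwise after taking logarithms.
-/

section InformationIdentities

variable {S A B : Type*} [Fintype S] (P : S → ℝ)

lemma sum_pmfOf_mul [Fintype A] (X : S → A) (g : A → ℝ) :
    ∑ a, pmfOf P X a * g a = ∑ s, P s * g (X s) := by
  simp only [pmfOf, Finset.sum_mul, ite_mul, zero_mul]
  rw [Finset.sum_comm]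
  simp

lemma pmfOf_pair (X : S → A) (Y : S → B) (a : A) (b : B) :
    pmfOf P (fun s => (X s, Y s)) (a, b) = pmfOf₂ P X Y a b := by
  simp [pmfOf, pmfOf₂, Prod.ext_iff]

lemma sum_sum_pmfOf₂_mul [Fintype A] [Fintype B] (X : S → A) (Y : S → B) (g : A → B → ℝ) :
    ∑ a, ∑ b, pmfOf₂ P X Y a b * g a b = ∑ s, P s * g (X s) (Y s) := by
  simp only [← pmfOf_pair]
  exact (Fintype.sum_prod_type _).symm.trans (sum_pmfOf_mul P _ fun c => g c.1 c.2)

lemma pmfOf₂_comm (X : S → A) (Y : S → B) (a : A) (b : B) :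
    pmfOf₂ P X Y a b = pmfOf₂ P Y X b a := by
  simp [pmfOf₂, and_comm]

lemma entropy_eq_neg_sum [Fintype A] (X : S → A) :
    entropy P X = -∑ s, P s * Real.log (pmfOf P X (X s)) := by
  rw [entropy, sum_pmfOf_mul]

variable {P}

lemma le_pmfOf_self (hP : ∀ s, 0 ≤ P s) (X : S → A) (s : S) : P s ≤ pmfOf P X (X s) := by
  unfold pmfOf
  calc P s = if X s = X s then P s else 0 := by simp
    _ ≤ ∑ t, if X t = X s then P t else 0 :=
      Finset.single_le_sum (f := fun t => if X t = X s then P t else 0)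
        (fun t _ => by split <;> simp [hP t]) (Finset.mem_univ s)

lemma pmfOf_self_pos (hP : ∀ s, 0 ≤ P s) (X : S → A) {s : S} (hs : 0 < P s) :
    0 < pmfOf P X (X s) :=
  hs.trans_le (le_pmfOf_self hP X s)

lemma condEntropy_eq_entropy_pair_sub [Fintype A] [Fintype B] (hP : ∀ s, 0 ≤ P s)
    (X : S → A) (Y : S → B) :
    condEntropy P X Y = entropy P (fun s => (X s, Y s)) - entropy P Y := by
  rw [condEntropy, sum_sum_pmfOf₂_mul, entropy_eq_neg_sum, entropy_eq_neg_sum]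
  suffices h : ∀ s, P s * Real.log (pmfOf₂ P X Y (X s) (Y s) / pmfOf P Y (Y s))
      = P s * Real.log (pmfOf P (fun s => (X s, Y s)) (X s, Y s))
        - P s * Real.log (pmfOf P Y (Y s)) by
    simp only [h, Finset.sum_sub_distrib]
    ring
  intro s
  rcases (hP s).eq_or_lt with hs | hs
  · simp [← hs]
  have hXY := pmfOf_self_pos hP (fun s => (X s, Y s)) hs
  rw [pmfOf_pair] at hXY ⊢
  rw [Real.log_div hXY.ne' (pmfOf_self_pos hP Y hs).ne', mul_sub]

lemma entropy_triple_add_entropy_of_condIndep {C D : Type*} [Fintype B] [Fintype C]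
    [Fintype D] (hP : ∀ s, 0 ≤ P s) (W : S → B) (Y : S → C) (Z : S → D)
    (hci : ∀ (u : C) (v : D) (w : B), 0 < pmfOf P W w →
      pmfOf₂ P (fun s => (Y s, Z s)) W (u, v) w / pmfOf P W w
        = (pmfOf₂ P Y W u w / pmfOf P W w) * (pmfOf₂ P Z W v w / pmfOf P W w)) :
    entropy P (fun s => (W s, (Y s, Z s))) + entropy P W
      = entropy P (fun s => (W s, Y s)) + entropy P (fun s => (W s, Z s)) := by
  simp only [entropy_eq_neg_sum, ← neg_add, ← Finset.sum_add_distrib, ← mul_add]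
  congr 1
  refine Finset.sum_congr rfl fun s _ => ?_
  rcases (hP s).eq_or_lt with hs | hs
  · simp [← hs]
  have hWYZ := pmfOf_self_pos hP (fun s => (W s, (Y s, Z s))) hs
  have hW := pmfOf_self_pos hP W hs
  have hWY := pmfOf_self_pos hP (fun s => (W s, Y s)) hs
  have hWZ := pmfOf_self_pos hP (fun s => (W s, Z s)) hs
  simp only [pmfOf_pair, pmfOf₂_comm P W] at hWYZ hWY hWZ ⊢
  have hprod : pmfOf₂ P (fun s => (Y s, Z s)) W (Y s, Z s) (W s) * pmfOf P W (W s)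
      = pmfOf₂ P Y W (Y s) (W s) * pmfOf₂ P Z W (Z s) (W s) := by
    have h := hci (Y s) (Z s) (W s) hW
    field_simp at h
    exact h
  rw [← Real.log_mul hWYZ.ne' hW.ne', ← Real.log_mul hWY.ne' hWZ.ne', hprod]

end InformationIdentities

theorem stmt_18_general {S W E A : Type*} [Fintype S] [Fintype W] [Fintype E] [Fintype A]
    (P : S → ℝ) (hP : ∀ s, 0 ≤ P s)
    (Om : S → W) (Ye : S → E) (Ya : S → A)
    (hci : ∀ (u : E) (v : A) (w : W), 0 < pmfOf P Om w →
      pmfOf₂ P (fun s => (Ye s, Ya s)) Om (u, v) w / pmfOf P Om w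
        = (pmfOf₂ P Ye Om u w / pmfOf P Om w) * (pmfOf₂ P Ya Om v w / pmfOf P Om w)) :
    mutualInfo P Ye Ya = mutualInfo P Om Ye - condMutualInfo P Om Ye Ya := by
  unfold mutualInfo condMutualInfo
  simp only [condEntropy_eq_entropy_pair_sub hP]
  linarith [entropy_triple_add_entropy_of_condIndep hP Om Ye Ya hci]

/-- Let `Ω`, `Y_e`, `Y_a` be random variables taking values in finite types
on a common finite probability space, with `Y_e` and `Y_a` conditionally independent given
`Ω`. Then `I(Y_e ; Y_a) = I(Ω ; Y_e) − I(Ω ; Y_e | Y_a)`. -/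
theorem stmt_18 {S W E A : Type*} [Fintype S] [Fintype W] [Fintype E] [Fintype A]
    (P : S → ℝ) (hP : ∀ s, 0 ≤ P s) (hP1 : ∑ s, P s = 1)
    (Om : S → W) (Ye : S → E) (Ya : S → A)
    (hci : ∀ (u : E) (v : A) (w : W), 0 < pmfOf P Om w →
      pmfOf₂ P (fun s => (Ye s, Ya s)) Om (u, v) w / pmfOf P Om w
        = (pmfOf₂ P Ye Om u w / pmfOf P Om w) * (pmfOf₂ P Ya Om v w / pmfOf P Om w)) :
    mutualInfo P Ye Ya = mutualInfo P Om Ye - condMutualInfo P Om Ye Ya :=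
  stmt_18_general P hP Om Ye Ya hci
end
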